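/- Suppose the real sequences (u_t) nonnegative, constants C ≥ 0, and nonnegative weights (w_k) satisfy (1/4)γ u_t² ≤ C + ∑_{k=0}^{t−1} w_k u_{k+1} for all t ≥ 1, where γ > 0 and u_{k+1} appears with the same bound for all k ≤ t−1. Then u_t ≤ (2/γ)∑_{k=0}^{t−1} w_k + √((4C/γ) + ((2/γ)∑_{k=0}^{t−1} w_k)²) for all t ≥ 1. -/

import Mathlib

open Finset

/-! Let `M = u s` be the largest of `u 1, …, u t`. The hypothesis at time `s`, with every
`u (k + 1)` bounded by `M`, gives `γ M² / 4 ≤ C + M ∑_{k<t} w k`; solving this quadratic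
inequality in `M` gives the bound, and `u t ≤ M`. -/

lemma le_add_sqrt_of_sq_le_add_two_mul {x a b : ℝ} (h : x ^ 2 ≤ a + 2 * b * x) :
    x ≤ b + √(a + b ^ 2) := by
  have hsq : (x - b) ^ 2 ≤ a + b ^ 2 := by linarith
  linarith [le_abs_self (x - b), Real.abs_le_sqrt hsq]

lemma sum_range_mul_le_mul_sum_range {w f : ℕ → ℝ} {M : ℝ} {s t : ℕ}
    (hw : ∀ k, 0 ≤ w k) (hM : 0 ≤ M) (hst : s ≤ t) (hf : ∀ k < s, f k ≤ M) :
    ∑ k ∈ range s, w k * f k ≤ M * ∑ k ∈ range t, w k :=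
  calc ∑ k ∈ range s, w k * f k
      ≤ ∑ k ∈ range s, w k * M :=
        sum_le_sum fun k hk => mul_le_mul_of_nonneg_left (hf k (mem_range.1 hk)) (hw k)
    _ = M * ∑ k ∈ range s, w k := by rw [← sum_mul, mul_comm]
    _ ≤ M * ∑ k ∈ range t, w k :=
        mul_le_mul_of_nonneg_left
          (sum_le_sum_of_subset_of_nonneg (range_subset_range.2 hst) fun k _ _ => hw k) hM

theorem stmt_12_general (u w : ℕ → ℝ) (C γ : ℝ)
    (hw : ∀ k, 0 ≤ w k) (hγ : 0 < γ)
    (hrec : ∀ t, 1 ≤ t →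
      (1 / 4) * γ * (u t) ^ 2 ≤ C + ∑ k ∈ range t, w k * u (k + 1)) :
    ∀ t, 1 ≤ t →
      u t ≤ (2 / γ) * ∑ k ∈ range t, w k
        + Real.sqrt (4 * C / γ + ((2 / γ) * ∑ k ∈ range t, w k) ^ 2) := by
  intro t ht
  set W := ∑ k ∈ range t, w k
  obtain ⟨s, hs, hmax⟩ := exists_max_image (Icc 1 t) u ⟨t, mem_Icc.2 ⟨ht, le_rfl⟩⟩
  obtain ⟨hs1, hst⟩ := mem_Icc.1 hs
  have hut : u t ≤ u s := hmax t (mem_Icc.2 ⟨ht, le_rfl⟩)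
  have hW : 0 ≤ 2 / γ * W := mul_nonneg (by positivity) (sum_nonneg fun k _ => hw k)
  rcases lt_or_ge (u s) 0 with hneg | hM
  · linarith [Real.sqrt_nonneg (4 * C / γ + (2 / γ * W) ^ 2)]
  refine hut.trans (le_add_sqrt_of_sq_le_add_two_mul ?_)
  have hquad : (1 / 4) * γ * u s ^ 2 ≤ C + u s * W :=
    (hrec s hs1).trans <| add_le_add_right (sum_range_mul_le_mul_sum_range hw hM hst
      fun k hk => hmax (k + 1) (mem_Icc.2 ⟨by omega, by omega⟩)) C
  have hrhs : 4 * C / γ + 2 * (2 / γ * W) * u s = 4 * (C + u s * W) / γ := by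
    field_simp; ring
  rw [hrhs, le_div_iff₀ hγ]
  linarith

/-- Discrete Gronwall-type inequality: if `(1/4)γ u_t² ≤ C + ∑_{k<t} w_k u_{k+1}`
for all `t ≥ 1`, then `u_t ≤ (2/γ)∑_{k<t} w_k + √(4C/γ + ((2/γ)∑_{k<t} w_k)²)`. -/
theorem stmt_12 (u w : ℕ → ℝ) (C γ : ℝ)
    (hu : ∀ k, 0 ≤ u k) (hw : ∀ k, 0 ≤ w k) (hC : 0 ≤ C) (hγ : 0 < γ)
    (hrec : ∀ t, 1 ≤ t →
      (1 / 4) * γ * (u t) ^ 2 ≤ C + ∑ k ∈ range t, w k * u (k + 1)) :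
    ∀ t, 1 ≤ t →
      u t ≤ (2 / γ) * ∑ k ∈ range t, w k
        + Real.sqrt (4 * C / γ + ((2 / γ) * ∑ k ∈ range t, w k) ^ 2) :=
  stmt_12_general u w C γ hw hγ hrec
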